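/- Suppose (F_λ^k)'(z) = λ^k exp(Σ_{j=0}^{k-1} F_λ^j(z)) and there is a constant C such that any point w in the cell C_m satisfies |Im w| ≤ C/m². Then there exists an integer N such that for all n > N, all 1 ≤ k ≤ n − N, and all z ∈ C_n, the argument θ_k(z) of (F_λ^k)'(z) satisfies |θ_k(z)| ≤ π/6, and hence Re (F_λ^k)'(z) ≥ (√3/2)|(F_λ^k)'(z)|. -/

import Mathlib

/-! The argument of `(F_λ^k)'(z) = λ^k exp(Σ_{j<k} F_λ^j(z))` is the imaginary part of the
orbit sum, as long as that lies in `(-π, π]`. Since `F_λ^j(z) ∈ C_{n-j}`, this imaginary part is at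
most `C Σ_{j<k} 1/(n-j)²`, and `1/m² ≤ 1/(m-1) - 1/m` telescopes the sum to at most
`C/(n-k) ≤ C/N`, which is `≤ π/6` once `N > 6C/π`. The bound on the real part is then
`Re w = |w| cos (arg w)`. -/

open Finset Real

noncomputable def expMap (lam : ℝ) (z : ℂ) : ℂ := lam * (Complex.exp z - 1)

noncomputable def iterDeriv (lam : ℝ) (k : ℕ) (z : ℂ) : ℂ :=
  (lam : ℂ) ^ k * Complex.exp (∑ j ∈ Finset.range k, (expMap lam)^[j] z)

lemma Complex.arg_ofReal_mul_exp {r : ℝ} (hr : 0 < r) {S : ℂ} (hS : S.im ∈ Set.Ioc (-π) π) :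
    Complex.arg (r * Complex.exp S) = S.im := by
  rw [Complex.arg_real_mul _ hr, Complex.arg_exp, toIocMod_eq_self]
  simpa [two_mul, ← add_assoc] using hS

lemma Complex.cos_mul_norm_le_re_of_abs_arg_le {w : ℂ} {θ : ℝ} (hθ : θ ≤ π)
    (hw : |Complex.arg w| ≤ θ) : Real.cos θ * ‖w‖ ≤ w.re := by
  rw [← Complex.norm_mul_cos_arg, mul_comm, ← Real.cos_abs (Complex.arg w)]
  gcongr
  exact Real.cos_le_cos_of_nonneg_of_le_pi (abs_nonneg _) hθ hw

lemma inv_add_inv_sq_le_inv {x : ℝ} (hx : 0 < x) : (x + 1)⁻¹ + ((x + 1) ^ 2)⁻¹ ≤ x⁻¹ := by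
  rw [← sub_nonneg]
  have key : x⁻¹ - ((x + 1)⁻¹ + ((x + 1) ^ 2)⁻¹) = (x * (x + 1) ^ 2)⁻¹ := by
    field_simp
    ring
  rw [key]
  positivity

lemma sum_range_inv_sq_sub_le {n k : ℕ} (hk : k < n) :
    ∑ j ∈ range k, (((n - j : ℕ) : ℝ) ^ 2)⁻¹ ≤ ((n - k : ℕ) : ℝ)⁻¹ := by
  induction k with
  | zero => simp
  | succ k ih =>
    obtain ⟨m, rfl⟩ : ∃ m, n = m + k + 2 := ⟨n - k - 2, by omega⟩
    have hcast : ((m + k + 2 - k : ℕ) : ℝ) = (m + 1 : ℕ) + 1 := by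
      rw [show m + k + 2 - k = m + 1 + 1 by omega]; push_cast; ring
    have ih := ih (by omega)
    rw [hcast] at ih
    rw [sum_range_succ, hcast, show m + k + 2 - (k + 1) = m + 1 by omega]
    exact (add_le_add ih le_rfl).trans
      (inv_add_inv_sq_le_inv (x := ((m + 1 : ℕ) : ℝ)) (by positivity))

lemma abs_im_sum_iterate_le {f : ℂ → ℂ} {Cc : ℕ → Set ℂ} {C₀ : ℝ} (hC₀ : 0 ≤ C₀)
    (horbit : ∀ n : ℕ, ∀ z ∈ Cc n, ∀ j ≤ n, f^[j] z ∈ Cc (n - j))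
    (hIm : ∀ m : ℕ, 1 ≤ m → ∀ w ∈ Cc m, |w.im| ≤ C₀ / (m : ℝ) ^ 2)
    {n k : ℕ} (hk : k < n) {z : ℂ} (hz : z ∈ Cc n) :
    |(∑ j ∈ range k, f^[j] z).im| ≤ C₀ / (n - k : ℕ) := by
  have hterm (j : ℕ) (hj : j ∈ range k) : |(f^[j] z).im| ≤ C₀ * (((n - j : ℕ) : ℝ) ^ 2)⁻¹ := by
    rw [mem_range] at hj
    rw [← div_eq_mul_inv]
    exact hIm _ (by omega) _ (horbit n z hz j (by omega))
  calc |(∑ j ∈ range k, f^[j] z).im|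
      ≤ ∑ j ∈ range k, |(f^[j] z).im| := by
        rw [Complex.im_sum]; exact abs_sum_le_sum_abs _ _
    _ ≤ C₀ * ∑ j ∈ range k, (((n - j : ℕ) : ℝ) ^ 2)⁻¹ := by
        rw [mul_sum]; exact sum_le_sum hterm
    _ ≤ C₀ * ((n - k : ℕ) : ℝ)⁻¹ := by gcongr; exact sum_range_inv_sq_sub_le hk
    _ = C₀ / (n - k : ℕ) := (div_eq_mul_inv _ _).symm

/-- If the cells `C_m` satisfy `|Im w| ≤ C/m²` on `C_m` and orbits of
points of `C_n` pass through the cells (`F_λ^j(z) ∈ C_{n−j}`), then there is `N` such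
that for all `n > N`, `1 ≤ k ≤ n − N` and `z ∈ C_n`, the argument of `(F_λ^k)'(z)` is at
most `π/6` in modulus, hence `Re (F_λ^k)'(z) ≥ (√3/2)|(F_λ^k)'(z)|`. -/
theorem stmt8 (lam : ℝ) (hlam : 1 ≤ lam) (Cc : ℕ → Set ℂ) (C₀ : ℝ) (hC₀ : 0 ≤ C₀)
    (horbit : ∀ n : ℕ, ∀ z ∈ Cc n, ∀ j ≤ n, (expMap lam)^[j] z ∈ Cc (n - j))
    (hIm : ∀ m : ℕ, 1 ≤ m → ∀ w ∈ Cc m, |w.im| ≤ C₀ / (m : ℝ) ^ 2) :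
    ∃ N : ℕ, ∀ n : ℕ, N < n → ∀ k : ℕ, 1 ≤ k → k ≤ n - N → ∀ z ∈ Cc n,
      |Complex.arg (iterDeriv lam k z)| ≤ Real.pi / 6 ∧
      Real.sqrt 3 / 2 * ‖iterDeriv lam k z‖ ≤ (iterDeriv lam k z).re := by
  obtain ⟨N, hN⟩ := exists_nat_gt (6 * C₀ / π)
  have hNpos : (0 : ℝ) < N := lt_of_le_of_lt (by positivity) hN
  have hN1 : 1 ≤ N := Nat.cast_pos.mp hNpos
  refine ⟨N, fun n _ k _ hkn z hz => ?_⟩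
  have hsmall : |(∑ j ∈ range k, (expMap lam)^[j] z).im| ≤ π / 6 := calc
    _ ≤ C₀ / (n - k : ℕ) := abs_im_sum_iterate_le hC₀ horbit hIm (by omega) hz
    _ ≤ C₀ / N := by gcongr; exact_mod_cast (by omega : N ≤ n - k)
    _ ≤ π / 6 := by
        rw [div_lt_iff₀ pi_pos] at hN
        rw [div_le_iff₀ hNpos]
        linarith
  have harg : Complex.arg (iterDeriv lam k z) = (∑ j ∈ range k, (expMap lam)^[j] z).im := by
    rw [iterDeriv, ← Complex.ofReal_pow]
    have := abs_le.mp hsmall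
    exact Complex.arg_ofReal_mul_exp (by positivity) ⟨by linarith [pi_pos], by linarith [pi_pos]⟩
  have hθ : |Complex.arg (iterDeriv lam k z)| ≤ π / 6 := harg ▸ hsmall
  exact ⟨hθ, cos_pi_div_six ▸ Complex.cos_mul_norm_le_re_of_abs_arg_le (by linarith [pi_pos]) hθ⟩
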